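/- arXiv:1706.08572 — 3 statements merged into one kernel-verified Lean document; each statement's English description precedes it below -/
import Mathlib

section
/- Let A, B ∈ m ⊂ ℂ[[x,y]] and X = A ∂/∂x + B ∂/∂y. Let n ≥ 1 and y₀(t) = Σ_{i≥n} a_i t^i ∈ ℂ[[t]] with ord_t y₀ ≥ n, and set α(t) = (t^n, y₀(t)). Let x(ε,t) = Σ_{j≥0} (ε^j/j!)·(X^j x)(α(t)) and y(ε,t) = Σ_{j≥0} (ε^j/j!)·(X^j y)(α(t)) in ℂ[[ε]][[t]] be the formal deformation of α by X. Then there exist σ(ε,t) ∈ ℂ[[ε]][[t]] of the form σ = u·t + (terms of order ≥ 2 in t) with u a unit of ℂ[[ε]], and elements ã_i ∈ ℂ[[ε]] for i ≥ n, such that x(ε,t) = σ(ε,t)^n, y(ε,t) = Σ_{i≥n} ã_i(ε)·σ(ε,t)^i, and ã_i(0) = a_i for every i ≥ n; that is, the deformation admits an irreducible Puiseux-type parametrization (t^n, Σ_{i≥n} ã_i(ε) t^i) whose coefficients specialize at ε = 0 to those of α. -/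
/-!
At `ε = 0` the deformation is `α` itself, and for `j ≥ 1` the series `X^j x`, `X^j y` lie in the
maximal ideal, so their substitutions into `α` have order `≥ n` in `t`. Hence both components are
divisible by `tⁿ`, and `x(ε,t) = tⁿ v` with `v ≡ 1 mod ε`. An `n`-th root of `v`, obtained from
the binomial series `(1 + X)^(1/n)`, gives `σ = t · v^(1/n) ≡ t mod ε`. Since `σ = u t + O(t²)`
with `u` a unit, `σ` has a compositional inverse `τ`, and the `ã_i` are the `t`-coefficients of
`y(ε, τ(ε,t))`; as `τ ≡ t mod ε`, they specialize to the `a_i`.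

`ℂ[[ε]][[t]]` is `PowerSeries (PowerSeries ℂ)`: the outer variable is `t`.
-/

open PowerSeries

/-- Substitution of `(x(t), y(t))` (both with zero constant term) into a
two-variable formal power series. -/
noncomputable def substPS (xt yt : PowerSeries ℂ) (f : MvPowerSeries (Fin 2) ℂ) :
    PowerSeries ℂ :=
  PowerSeries.mk fun k =>
    ∑ ij ∈ Finset.range (k + 1) ×ˢ Finset.range (k + 1),
      MvPowerSeries.coeff (R := ℂ) (Finsupp.single 0 ij.1 + Finsupp.single 1 ij.2) f *
        PowerSeries.coeff (R := ℂ) k (xt ^ ij.1 * yt ^ ij.2)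

/-- Formal partial derivative of a two-variable power series with respect to the
`i`-th variable. -/
noncomputable def pderiv2 (i : Fin 2) (f : MvPowerSeries (Fin 2) ℂ) :
    MvPowerSeries (Fin 2) ℂ :=
  fun d => ((d i : ℂ) + 1) * MvPowerSeries.coeff (R := ℂ) (d + Finsupp.single i 1) f

/-- The action of the vector field `X = A ∂/∂x + B ∂/∂y` as a derivation. -/
noncomputable def Dv (A B f : MvPowerSeries (Fin 2) ℂ) : MvPowerSeries (Fin 2) ℂ :=
  A * pderiv2 0 f + B * pderiv2 1 f

/-- The maximal ideal of `ℂ[[x,y]]`: series with zero constant term. -/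
noncomputable def mIdeal : Ideal (MvPowerSeries (Fin 2) ℂ) :=
  RingHom.ker (MvPowerSeries.constantCoeff (σ := Fin 2) (R := ℂ))

/-- The component `Σ_{j≥0} (ε^j/j!)·(X^j g)(α(t)) ∈ ℂ[[ε]][[t]]` of the formal
deformation of `α = (xt, yt)` by `X = A ∂/∂x + B ∂/∂y`: the coefficient of
`ε^j t^k` is `(1/j!)` times the `t^k`-coefficient of `(X^j g)(α(t))`. -/
noncomputable def deformComp (A B g : MvPowerSeries (Fin 2) ℂ)
    (xt yt : PowerSeries ℂ) : PowerSeries (PowerSeries ℂ) :=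
  PowerSeries.mk fun k =>
    PowerSeries.mk fun j =>
      ((j.factorial : ℂ))⁻¹ * PowerSeries.coeff (R := ℂ) k (substPS xt yt ((Dv A B)^[j] g))

/-- `Σ_{i} ã_i(ε)·σ(ε,t)^i ∈ ℂ[[ε]][[t]]`, well defined as soon as `σ` has zero
constant term in `t` (only `i ≤ k` contributes to the coefficient of `t^k`). -/
noncomputable def sumSigma (atil : ℕ → PowerSeries ℂ)
    (σ : PowerSeries (PowerSeries ℂ)) : PowerSeries (PowerSeries ℂ) :=
  PowerSeries.mk fun k =>
    ∑ i ∈ Finset.range (k + 1),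
      atil i * PowerSeries.coeff (R := PowerSeries ℂ) k (σ ^ i)

namespace PowerSeries

theorem binomialSeries_pow {R A : Type*} [CommRing R] [BinomialRing R] [CommRing A]
    [Algebra R A] (r : R) (n : ℕ) :
    binomialSeries A r ^ n = binomialSeries A (n * r) := by
  induction n with
  | zero => simp
  | succ n ih => rw [pow_succ, ih, ← binomialSeries_add]; push_cast; ring_nf

/-- The root is `(1 + X) ^ (1 / n)` evaluated at `X = g - 1`. -/
theorem exists_pow_eq_of_constantCoeff_eq_one {S : Type*} [CommRing S] [Algebra ℚ S]
    {n : ℕ} (hn : n ≠ 0) {g : S⟦X⟧} (hg : constantCoeff g = 1) :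
    ∃ h : S⟦X⟧, constantCoeff h = 1 ∧ h ^ n = g := by
  have hg1 : constantCoeff (g - 1) = 0 := by simp [hg]
  have hs : HasSubst (g - 1) := HasSubst.of_constantCoeff_zero' hg1
  refine ⟨substAlgHom hs (binomialSeries S (n⁻¹ : ℚ)), ?_, ?_⟩
  · have := constantCoeff_subst_eq_zero hg1 (binomialSeries S (n⁻¹ : ℚ) - 1) (by simp)
    rw [← coe_substAlgHom hs, map_sub, map_one, map_sub, map_one] at this
    exact sub_eq_zero.mp this
  · rw [← map_pow, binomialSeries_pow, mul_inv_cancel₀ (by exact_mod_cast hn),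
      ← Nat.cast_one (R := ℚ), binomialSeries_nat, pow_one, map_add, map_one, substAlgHom_X]
    ring

theorem eq_one_of_pow_eq_one {R : Type*} [CommRing R] [IsDomain R] [CharZero R] {n : ℕ}
    (hn : n ≠ 0) {p : R⟦X⟧} (hp : constantCoeff p = 1) (h : p ^ n = 1) : p = 1 := by
  have hgeom : (∑ i ∈ Finset.range n, p ^ i) * (p - 1) = 0 := by
    rw [geom_sum_mul, h, sub_self]
  have hsum : ∑ i ∈ Finset.range n, p ^ i ≠ 0 := fun h0 => by
    have := congrArg constantCoeff h0
    simp only [map_sum, map_pow, hp, one_pow, Finset.sum_const, Finset.card_range, nsmul_eq_mul,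
      mul_one, map_zero, Nat.cast_eq_zero] at this
    exact hn this
  exact sub_eq_zero.mp ((mul_eq_zero.mp hgeom).resolve_left hsum)

theorem constantCoeff_map {R S : Type*} [CommRing R] [CommRing S] (f : R →+* S) (φ : R⟦X⟧) :
    constantCoeff (map f φ) = f (constantCoeff φ) :=
  MvPowerSeries.constantCoeff_map f φ

variable {K : Type*} [Field K] [CharZero K]

/-- `v - 1` need not be `t`-adically small, so we first take an `n`-th root `r` of the constant
term of `v` in `K⟦ε⟧` and then one of `v / rⁿ`. -/
theorem exists_pow_eq_of_map_constantCoeff_eq_one {n : ℕ} (hn : n ≠ 0) {v : K⟦X⟧⟦X⟧}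
    (hv : map constantCoeff v = 1) : ∃ q : K⟦X⟧⟦X⟧, q ^ n = v ∧ map constantCoeff q = 1 := by
  have hc : constantCoeff (constantCoeff v) = 1 := by
    rw [← constantCoeff_map, hv, map_one]
  obtain ⟨r, hr1, hrn⟩ := exists_pow_eq_of_constantCoeff_eq_one hn hc
  have hr : IsUnit r := isUnit_iff_constantCoeff.mpr (by rw [hr1]; exact isUnit_one)
  obtain ⟨s, hrs⟩ := hr.exists_right_inv
  have hs1 : constantCoeff s = 1 := by simpa [hr1] using congrArg constantCoeff hrs
  have hw : constantCoeff (C (s ^ n) * v) = 1 := by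
    rw [map_mul, constantCoeff_C, ← hrn, ← mul_pow, mul_comm, hrs, one_pow]
  obtain ⟨h, hh1, hhn⟩ := exists_pow_eq_of_constantCoeff_eq_one hn hw
  have hmap_h : map constantCoeff h = 1 := by
    refine eq_one_of_pow_eq_one hn (by rw [constantCoeff_map, hh1, map_one]) ?_
    rw [← map_pow, hhn, map_mul, hv, map_C, map_pow, hs1, one_pow, map_one, mul_one]
  refine ⟨C r * h, ?_, ?_⟩
  · rw [mul_pow, hhn, ← mul_assoc, ← map_pow, ← map_mul, ← mul_pow, hrs, one_pow, map_one,
      one_mul]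
  · rw [map_mul, map_C, hr1, map_one, one_mul, hmap_h]

theorem exists_pow_eq_of_map_constantCoeff_eq_X_pow {n : ℕ} (hn : n ≠ 0) {F : K⟦X⟧⟦X⟧}
    (hF : X ^ n ∣ F) (hF0 : map constantCoeff F = X ^ n) :
    ∃ σ : K⟦X⟧⟦X⟧, constantCoeff σ = 0 ∧ IsUnit (coeff 1 σ) ∧ σ ^ n = F ∧
      map constantCoeff σ = X := by
  obtain ⟨v, rfl⟩ := hF
  have hv : map constantCoeff v = 1 := by
    rw [map_mul, map_pow, map_X] at hF0
    exact mul_left_cancel₀ (pow_ne_zero n X_ne_zero) (hF0.trans (mul_one _).symm)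
  obtain ⟨q, hqn, hq⟩ := exists_pow_eq_of_map_constantCoeff_eq_one hn hv
  have hq0 : IsUnit (constantCoeff q) := by
    rw [isUnit_iff_constantCoeff, ← constantCoeff_map, hq, map_one]
    exact isUnit_one
  refine ⟨X * q, by simp, ?_, by rw [mul_pow, hqn], by rw [map_mul, map_X, hq, mul_one]⟩
  rwa [coeff_succ_X_mul, coeff_zero_eq_constantCoeff_apply]

variable {R S : Type*} [CommRing R] [CommRing S]

theorem X_pow_dvd_subst {τ f : R⟦X⟧} (hτ : constantCoeff τ = 0) {n : ℕ} (hf : X ^ n ∣ f) :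
    X ^ n ∣ f.subst τ := by
  obtain ⟨g, rfl⟩ := hf
  have hs := HasSubst.of_constantCoeff_zero' hτ
  rw [subst_mul hs, subst_pow hs, subst_X hs]
  exact dvd_mul_of_dvd_left (pow_dvd_pow_of_dvd (X_dvd_iff.mpr hτ) n) _

theorem map_subst' (f : R →+* S) {a : R⟦X⟧} (ha : HasSubst a) (φ : R⟦X⟧) :
    map f (φ.subst a) = (map f φ).subst (map f a) :=
  map_subst ha φ

theorem map_substInvOfIsUnit (f : R →+* S) {σ : R⟦X⟧} (hσ : constantCoeff σ = 0)
    (hσ1 : IsUnit (coeff 1 σ)) (hf : map f σ = X) : map f (σ.substInvOfIsUnit hσ1) = X := by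
  have := map_subst' f (HasSubst.of_constantCoeff_zero' hσ) (σ.substInvOfIsUnit hσ1)
  rwa [subst_substInvOfIsUnit_left σ hσ hσ1, map_X, hf, X_subst, eq_comm] at this

end PowerSeries

theorem sumSigma_eq_subst {σ : ℂ⟦X⟧⟦X⟧} (hσ : constantCoeff σ = 0) (a : ℕ → ℂ⟦X⟧) :
    sumSigma a σ = (mk a).subst σ := by
  ext k
  rw [sumSigma, coeff_mk, coeff_subst' (HasSubst.of_constantCoeff_zero' hσ)]
  have hsupp : (Function.support fun d => coeff d (mk a) • coeff k (σ ^ d)) ⊆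
      ↑(Finset.range (k + 1)) := by
    intro d hd
    by_contra hdk
    have hlt : k < d := by simpa using hdk
    exact hd (by
      simp only [X_pow_dvd_iff.mp (pow_dvd_pow_of_dvd (X_dvd_iff.mpr hσ) d) k hlt, smul_zero])
  rw [finsum_eq_sum_of_support_subset _ hsupp]
  simp only [coeff_mk, smul_eq_mul]

theorem exists_eq_sumSigma {σ : ℂ⟦X⟧⟦X⟧} (hσ : constantCoeff σ = 0) (hσ1 : IsUnit (coeff 1 σ))
    (hσX : map constantCoeff σ = X) {n : ℕ} {Y : ℂ⟦X⟧⟦X⟧} (hY : X ^ n ∣ Y) :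
    ∃ a : ℕ → ℂ⟦X⟧, Y = sumSigma a σ ∧ (∀ i < n, a i = 0) ∧
      ∀ i, constantCoeff (a i) = coeff i (map constantCoeff Y) := by
  set τ := σ.substInvOfIsUnit hσ1
  have hτ := HasSubst.substInvOfIsUnit σ hσ1
  refine ⟨fun i => coeff i (Y.subst τ), ?_, fun i hi => ?_, fun i => ?_⟩
  · have hmk : mk (fun i => coeff i (Y.subst τ)) = Y.subst τ := ext fun _ => coeff_mk _ _
    rw [sumSigma_eq_subst hσ, hmk, subst_comp_subst_apply hτ (HasSubst.of_constantCoeff_zero' hσ),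
      subst_substInvOfIsUnit_left σ hσ hσ1, X_subst]
  · exact X_pow_dvd_iff.mp (X_pow_dvd_subst (constantCoeff_substInvOfIsUnit σ hσ1) hY) i hi
  · rw [← coeff_map, map_subst' _ hτ, map_substInvOfIsUnit _ hσ hσ1 hσX, X_subst]

theorem constantCoeff_Dv {A B : MvPowerSeries (Fin 2) ℂ} (hA : A ∈ mIdeal) (hB : B ∈ mIdeal)
    (f : MvPowerSeries (Fin 2) ℂ) : MvPowerSeries.constantCoeff (Dv A B f) = 0 := by
  rw [mIdeal, RingHom.mem_ker] at hA hB
  simp [Dv, hA, hB]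

section Deformation

variable {xt yt : ℂ⟦X⟧}

theorem substPS_monomial (hx : X ∣ xt) (hy : X ∣ yt) (a b : ℕ) :
    substPS xt yt (MvPowerSeries.monomial (Finsupp.single 0 a + Finsupp.single 1 b) 1) =
      xt ^ a * yt ^ b := by
  ext k
  rw [substPS, coeff_mk, Finset.sum_eq_single (a, b)]
  · rw [MvPowerSeries.coeff_monomial_same, one_mul]
  · rintro ⟨i, j⟩ - hij
    rw [MvPowerSeries.coeff_monomial_ne, zero_mul]
    intro h
    have h0 := DFunLike.congr_fun h 0
    have h1 := DFunLike.congr_fun h 1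
    simp only [Finsupp.add_apply, Finsupp.single_apply] at h0 h1
    simp_all
  · intro hab
    have hk : k < a + b := by simp at hab; omega
    have hdvd : X ^ (a + b) ∣ xt ^ a * yt ^ b := by
      rw [pow_add]
      exact mul_dvd_mul (pow_dvd_pow_of_dvd hx a) (pow_dvd_pow_of_dvd hy b)
    rw [X_pow_dvd_iff.mp hdvd k hk, mul_zero]

theorem substPS_X_zero (hx : X ∣ xt) (hy : X ∣ yt) : substPS xt yt (MvPowerSeries.X 0) = xt := by
  simpa [MvPowerSeries.X_def] using substPS_monomial hx hy 1 0

theorem substPS_X_one (hx : X ∣ xt) (hy : X ∣ yt) : substPS xt yt (MvPowerSeries.X 1) = yt := by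
  simpa [MvPowerSeries.X_def] using substPS_monomial hx hy 0 1

theorem X_pow_dvd_substPS {n : ℕ} (hx : X ^ n ∣ xt) (hy : X ^ n ∣ yt)
    {f : MvPowerSeries (Fin 2) ℂ} (hf : MvPowerSeries.constantCoeff f = 0) :
    X ^ n ∣ substPS xt yt f := by
  refine X_pow_dvd_iff.mpr fun k hk => ?_
  rw [substPS, coeff_mk]
  refine Finset.sum_eq_zero fun ⟨i, j⟩ _ => ?_
  rcases Nat.eq_zero_or_pos i with rfl | hi
  · rcases Nat.eq_zero_or_pos j with rfl | hj
    · simp [hf]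
    · rw [X_pow_dvd_iff.mp (hy.trans (dvd_mul_of_dvd_right (dvd_pow_self yt hj.ne') _)) k hk,
        mul_zero]
  · rw [X_pow_dvd_iff.mp (hx.trans (dvd_mul_of_dvd_left (dvd_pow_self xt hi.ne') _)) k hk,
      mul_zero]

theorem map_constantCoeff_deformComp (A B g : MvPowerSeries (Fin 2) ℂ) :
    map constantCoeff (deformComp A B g xt yt) = substPS xt yt g := by
  ext k
  simp [deformComp, coeff_map, ← coeff_zero_eq_constantCoeff_apply]

theorem X_pow_dvd_deformComp {A B : MvPowerSeries (Fin 2) ℂ} (hA : A ∈ mIdeal) (hB : B ∈ mIdeal)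
    {n : ℕ} (hx : X ^ n ∣ xt) (hy : X ^ n ∣ yt) {g : MvPowerSeries (Fin 2) ℂ}
    (hg : X ^ n ∣ substPS xt yt g) : X ^ n ∣ deformComp A B g xt yt := by
  refine X_pow_dvd_iff.mpr fun k hk => ?_
  ext j
  rw [deformComp, coeff_mk, coeff_mk, map_zero]
  cases j with
  | zero => rw [Function.iterate_zero_apply, X_pow_dvd_iff.mp hg k hk, mul_zero]
  | succ j =>
    rw [Function.iterate_succ_apply',
      X_pow_dvd_iff.mp (X_pow_dvd_substPS hx hy (constantCoeff_Dv hA hB _)) k hk, mul_zero]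

end Deformation

theorem deformation_admits_puiseux_parametrization
    (A B : MvPowerSeries (Fin 2) ℂ) (hA : A ∈ mIdeal) (hB : B ∈ mIdeal)
    (n : ℕ) (hn : 1 ≤ n)
    (y0 : PowerSeries ℂ) (hy0 : ∀ i < n, PowerSeries.coeff (R := ℂ) i y0 = 0) :
    ∃ (σ : PowerSeries (PowerSeries ℂ)) (atil : ℕ → PowerSeries ℂ),
      PowerSeries.coeff (R := PowerSeries ℂ) 0 σ = 0 ∧
      IsUnit (PowerSeries.coeff (R := PowerSeries ℂ) 1 σ) ∧
      deformComp A B (MvPowerSeries.X 0) (PowerSeries.X ^ n) y0 = σ ^ n ∧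
      deformComp A B (MvPowerSeries.X 1) (PowerSeries.X ^ n) y0 = sumSigma atil σ ∧
      (∀ i < n, atil i = 0) ∧
      (∀ i, PowerSeries.constantCoeff (R := ℂ) (atil i) = PowerSeries.coeff (R := ℂ) i y0) := by
  have hn0 : n ≠ 0 := by omega
  have hy : X ^ n ∣ y0 := X_pow_dvd_iff.mpr hy0
  have hX : (X : ℂ⟦X⟧) ∣ X ^ n := dvd_pow_self X hn0
  have hx_sub : substPS (X ^ n) y0 (MvPowerSeries.X 0) = X ^ n := substPS_X_zero hX (hX.trans hy)
  have hy_sub : substPS (X ^ n) y0 (MvPowerSeries.X 1) = y0 := substPS_X_one hX (hX.trans hy)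
  obtain ⟨σ, hσ0, hσ1, hσn, hσX⟩ := exists_pow_eq_of_map_constantCoeff_eq_X_pow hn0
    (X_pow_dvd_deformComp hA hB dvd_rfl hy (by rw [hx_sub]))
    (by rw [map_constantCoeff_deformComp, hx_sub])
  obtain ⟨atil, hY, hatil0, hatil⟩ :=
    exists_eq_sumSigma hσ0 hσ1 hσX (X_pow_dvd_deformComp hA hB dvd_rfl hy (by rwa [hy_sub]))
  refine ⟨σ, atil, by rwa [coeff_zero_eq_constantCoeff_apply], hσ1, hσn.symm, hY, hatil0,
    fun i => ?_⟩
  rw [hatil, map_constantCoeff_deformComp, hy_sub]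
end

section
/- Let 1 ≤ n < m be integers and let y(t) = Σ_{i≥m} a_i t^i ∈ ℂ[[t]] with a_m ≠ 0. Suppose there exists i > m with a_i ≠ 0 and let λ be the least such index. Then ord_t( m·y(t)·n·t^{n−1} − n·t^n·y'(t) ) = λ + n − 1; equivalently, the contact of the 1-form m·y dx − n·x dy with the branch parametrized by (t^n, y(t)) equals λ + n (this identifies Zariski's λ invariant as υ_Γ(m y dx − n x dy) − n). -/
/-!
Writing `x = tⁿ`, the form `m·y dx − n·x dy` pulls back to `n·t^(n-1)·(m·y − t·y')`, and
`m·y − t·y'` has coefficients `(m − i)·aᵢ`. The factor `m − i` kills exactly the leading term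
`aₘ tᵐ`, so the first surviving coefficient is `(m − λ)·a_λ ≠ 0`.
-/

open PowerSeries

namespace PowerSeries

variable {R : Type*}

theorem coeff_X_mul_derivative [CommSemiring R] (f : R⟦X⟧) (i : ℕ) :
    coeff i (X * d⁄dX R f) = i * coeff i f := by
  cases i with
  | zero => simp
  | succ i => rw [coeff_succ_X_mul, coeff_derivative, mul_comm]; push_cast; rfl

theorem coeff_C_mul_sub_X_mul_derivative [CommRing R] (c : R) (f : R⟦X⟧) (i : ℕ) :
    coeff i (C c * f - X * d⁄dX R f) = (c - i) * coeff i f := by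
  rw [map_sub, coeff_C_mul, coeff_X_mul_derivative, sub_mul]

theorem order_C_natCast_mul_sub_X_mul_derivative [CommRing R] [NoZeroDivisors R] [CharZero R]
    {f : R⟦X⟧} {m l : ℕ} (hml : m ≠ l) (hl : coeff l f ≠ 0)
    (hvanish : ∀ i < l, i ≠ m → coeff i f = 0) :
    order (C (m : R) * f - X * d⁄dX R f) = l := by
  refine order_eq_nat.2 ⟨?_, fun i hi => ?_⟩ <;> rw [coeff_C_mul_sub_X_mul_derivative]
  · exact mul_ne_zero (sub_ne_zero.2 (Nat.cast_injective.ne hml)) hl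
  · obtain rfl | him := eq_or_ne i m
    · rw [sub_self, zero_mul]
    · rw [hvanish i hi him, mul_zero]

theorem C_mul_mul_X_pow_sub_X_pow_mul_derivative [CommRing R] (a b : R) (f : R⟦X⟧) {n : ℕ}
    (hn : 1 ≤ n) :
    C a * f * (C b * X ^ (n - 1)) - C b * X ^ n * d⁄dX R f =
      C b * X ^ (n - 1) * (C a * f - X * d⁄dX R f) := by
  obtain ⟨k, rfl⟩ := Nat.exists_eq_add_of_le' hn
  simp only [Nat.add_sub_cancel, pow_succ]
  ring

end PowerSeries

theorem zariski_lambda_contact_general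
    (n m lam : ℕ) (hn : 1 ≤ n)
    (y : PowerSeries ℂ)
    (hlow : ∀ i < m, PowerSeries.coeff i y = 0)
    (hlam : m < lam ∧ PowerSeries.coeff lam y ≠ 0)
    (hleast : ∀ i, m < i → PowerSeries.coeff i y ≠ 0 → lam ≤ i) :
    PowerSeries.order
        (PowerSeries.C (m : ℂ) * y * (PowerSeries.C (n : ℂ) * PowerSeries.X ^ (n - 1)) -
          PowerSeries.C (n : ℂ) * PowerSeries.X ^ n * PowerSeries.derivativeFun y)
      = ((lam + n - 1 : ℕ) : ℕ∞) := by
  have hvanish : ∀ i < lam, i ≠ m → coeff i y = 0 := fun i hi him => by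
    rcases him.lt_or_gt with him | him
    · exact hlow i him
    · by_contra hy
      exact hi.not_ge (hleast i him hy)
  have hC : order (C (n : ℂ)) = 0 := by
    rw [← monomial_zero_eq_C_apply]
    exact order_monomial_of_ne_zero 0 _ (Nat.cast_ne_zero.2 (by omega))
  change order (_ - _ * d⁄dX ℂ y) = _
  rw [C_mul_mul_X_pow_sub_X_pow_mul_derivative _ _ _ hn, order_mul, order_mul, hC, order_X_pow,
    order_C_natCast_mul_sub_X_mul_derivative hlam.1.ne hlam.2 hvanish,
    show lam + n - 1 = n - 1 + lam by omega]
  simp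

theorem zariski_lambda_contact
    (n m lam : ℕ) (hn : 1 ≤ n) (hnm : n < m)
    (y : PowerSeries ℂ)
    (hlow : ∀ i < m, PowerSeries.coeff i y = 0)
    (hm : PowerSeries.coeff m y ≠ 0)
    (hlam : m < lam ∧ PowerSeries.coeff lam y ≠ 0)
    (hleast : ∀ i, m < i → PowerSeries.coeff i y ≠ 0 → lam ≤ i) :
    PowerSeries.order
        (PowerSeries.C (m : ℂ) * y * (PowerSeries.C (n : ℂ) * PowerSeries.X ^ (n - 1)) -
          PowerSeries.C (n : ℂ) * PowerSeries.X ^ n * PowerSeries.derivativeFun y)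
      = ((lam + n - 1 : ℕ) : ℕ∞) :=
  zariski_lambda_contact_general n m lam hn y hlow hlam hleast
end

section
/- Let n ≥ 1 and for each integer i ≥ n let a_i : ℂ → ℂ be a function analytic at 0, with a_n(0) ≠ 0. Then there exist functions r_i : ℂ → ℂ for i ≥ 1, each analytic at 0, with r_1(0) ≠ 0, such that the power-series identity (Σ_{i≥1} r_i(z)·t^i)^n = Σ_{i≥n} a_i(z)·t^i holds coefficientwise near 0: for every k ∈ ℕ there is a neighbourhood of 0 in ℂ on which the coefficient of t^k in (Σ_{i≥1} r_i(z) t^i)^n equals a_k(z) (where a_k := 0 for k < n). -/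
/-!
Write `Σ_{i≥n} a_i(z) tⁱ = tⁿ B` and work over the ring `R` of functions analytic at `0`.
A branch `s = c · exp (log (a_n / a_n(0)) / n)` of `a_n^{1/n}` is a unit of `R`, and `s` is
a simple root of `Yⁿ - B` modulo `t` because `n sⁿ⁻¹` is a unit. As `R⟦t⟧` is `t`-adically
complete, hence Henselian, `s` lifts to `S ∈ R⟦t⟧` with `Sⁿ = B`, and `r = t S` is the root.
-/

open PowerSeries Filter Topology

section

variable (𝕜 : Type*) [NontriviallyNormedField 𝕜] {E : Type*} [NormedAddCommGroup E]
  [NormedSpace 𝕜 E] (A : Type*) [NormedRing A] [NormedAlgebra 𝕜 A]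

def analyticAtSubalgebra (x : E) : Subalgebra 𝕜 (E → A) where
  carrier := {f | AnalyticAt 𝕜 f x}
  mul_mem' := AnalyticAt.mul
  add_mem' := AnalyticAt.add
  algebraMap_mem' _ := analyticAt_const

end

theorem AnalyticAt.exists_isUnit_pow_eventuallyEq {E : Type*} [NormedAddCommGroup E]
    [NormedSpace ℂ E] {f : E → ℂ} {x : E} (hf : AnalyticAt ℂ f x) (hfx : f x ≠ 0)
    {n : ℕ} (hn : n ≠ 0) :
    ∃ g : analyticAtSubalgebra ℂ ℂ x, IsUnit g ∧ (g : E → ℂ) ^ n =ᶠ[𝓝 x] f := by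
  obtain ⟨c, hc⟩ := IsAlgClosed.exists_pow_nat_eq (f x) (Nat.pos_of_ne_zero hn)
  have hc0 : c ≠ 0 := by rintro rfl; exact hfx (by simpa [hn] using hc.symm)
  set h : E → ℂ := fun z => Complex.log (f z / f x) / n
  have hh : AnalyticAt ℂ h x :=
    ((hf.div analyticAt_const hfx).clog (by simp [hfx])).div analyticAt_const
      (by exact_mod_cast hn)
  let g : analyticAtSubalgebra ℂ ℂ x :=
    ⟨fun z => c * Complex.exp (h z), analyticAt_const.mul hh.cexp'⟩
  let g' : analyticAtSubalgebra ℂ ℂ x :=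
    ⟨fun z => c⁻¹ * Complex.exp (-h z), analyticAt_const.mul hh.neg.cexp'⟩
  refine ⟨g, IsUnit.of_mul_eq_one g' ?_, ?_⟩
  · ext z
    simp [g, g', mul_mul_mul_comm, hc0, ← Complex.exp_add]
  · filter_upwards [hf.continuousAt.eventually_ne hfx] with z hz
    simp [g, h, mul_pow, ← Complex.exp_nat_mul, mul_div_cancel₀, Complex.exp_log, hz, hfx, hc,
      hn]

theorem PowerSeries.exists_pow_eq_of_constantCoeff_eq_pow {R : Type*} [CommRing R] {n : ℕ}
    (hn : n ≠ 0) {B : R⟦X⟧} {s : R} (hB : constantCoeff B = s ^ n)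
    (hs : IsUnit ((n : R) * s ^ (n - 1))) :
    ∃ S : R⟦X⟧, S ^ n = B ∧ constantCoeff S = s := by
  have hroot₀ : (Polynomial.X ^ n - Polynomial.C B).eval (C s) ∈ Ideal.span {X} := by
    rw [Ideal.mem_span_singleton, X_dvd_iff]
    simp [hB]
  have hsimple : IsUnit (Ideal.Quotient.mk (Ideal.span {X})
      ((Polynomial.X ^ n - Polynomial.C B).derivative.eval (C s))) := by
    have hderiv : (Polynomial.X ^ n - Polynomial.C B).derivative.eval (C s) =
        C ((n : R) * s ^ (n - 1)) := by
      simp [Polynomial.derivative_X_pow]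
    rw [hderiv]
    exact (hs.map C).map _
  obtain ⟨S, hroot, hS⟩ := HenselianRing.is_henselian (Polynomial.X ^ n - Polynomial.C B)
    (Polynomial.monic_X_pow_sub_C B hn) (C s) hroot₀ hsimple
  refine ⟨S, by simpa [sub_eq_zero] using hroot, ?_⟩
  rw [Ideal.mem_span_singleton, X_dvd_iff] at hS
  simpa [sub_eq_zero] using hS

theorem analytic_nth_root_of_puiseux_component
    (n : ℕ) (hn : 1 ≤ n) (a : ℕ → ℂ → ℂ)
    (ha : ∀ i, n ≤ i → AnalyticAt ℂ (a i) 0)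
    (han : a n 0 ≠ 0) :
    ∃ r : ℕ → ℂ → ℂ,
      (∀ i, 1 ≤ i → AnalyticAt ℂ (r i) 0) ∧ r 1 0 ≠ 0 ∧
      ∀ k : ℕ, ∀ᶠ z in nhds (0 : ℂ),
        PowerSeries.coeff k
            ((PowerSeries.mk fun i => if i = 0 then 0 else r i z) ^ n)
          = if k < n then 0 else a k z := by
  have hn₀ : n ≠ 0 := by omega
  obtain ⟨s, hs_unit, hs_pow⟩ := (ha n le_rfl).exists_isUnit_pow_eventuallyEq han hn₀
  let R := analyticAtSubalgebra ℂ ℂ (0 : ℂ)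
  -- `s ^ n` agrees with `a n` only near `0`, so it replaces `a n` as the constant coefficient.
  let B : R⟦X⟧ := mk fun i => if i = 0 then s ^ n else ⟨a (i + n), ha _ (by omega)⟩
  have hn_unit : IsUnit (n : R) := by
    simpa using (IsUnit.mk0 (n : ℂ) (by exact_mod_cast hn₀)).map (algebraMap ℂ R)
  obtain ⟨S, hSB, hS₀⟩ := exists_pow_eq_of_constantCoeff_eq_pow hn₀ (B := B)
    (by simp [B]) (hn_unit.mul (hs_unit.pow _))
  let ev (z : ℂ) : R →+* ℂ := (Pi.evalRingHom (fun _ : ℂ => ℂ) z).comp R.val.toRingHom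
  refine ⟨fun i => (coeff (i - 1) S : R), fun i _ => (coeff (i - 1) S).2, ?_, fun k => ?_⟩
  · simpa [hS₀, ev] using (hs_unit.map (ev 0)).ne_zero
  filter_upwards [hs_pow] with z hz
  have hshift : (mk fun i => if i = 0 then 0 else ((coeff (i - 1) S : R) : ℂ → ℂ) z) =
      X * map (ev z) S := by
    ext (_ | i) <;> simp [coeff_succ_X_mul, ev]
  rw [hshift, mul_pow, ← map_pow, hSB, coeff_X_pow_mul']
  by_cases hk : k < n
  · simp [hk, not_le.2 hk]
  obtain ⟨j, rfl⟩ := Nat.exists_eq_add_of_le (not_lt.1 hk)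
  rcases j with _ | j
  · simpa [B, ev] using hz
  · simp [B, ev, add_comm]
end
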